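/- Under the setup, suppose D₁ ≥ D₀ almost surely, for all d, z ∈ {0,1} the pair (Z, W) is conditionally independent of Y_{d,z} given (D₁, D₀), Z is conditionally independent of (D₁, D₀) given W, P(Z = z, W = w) > 0 for all z, w ∈ {0,1}, P(NT) > 0, P(CP) > 0, E[Y_{0,1} − Y_{0,0} | NT] = ρ₀, and the relevance condition P(NT | W = 1)·P(CP | W = 0) ≠ P(NT | W = 0)·P(CP | W = 1) holds. Then ρ₀ = (r₀(1)·P(CP | W = 0) − r₀(0)·P(CP | W = 1)) / (P(NT | W = 1)·P(CP | W = 0) − P(NT | W = 0)·P(CP | W = 1)), where r₀(w) = E[Y·(1−D) | Z = 1, W = w] − E[Y·(1−D) | Z = 0, W = w]. -/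

import Mathlib

/-!
On the cell `{Z = 1, W = w}` the untreated units are, by monotonicity, exactly the never takers;
on `{Z = 0, W = w}` they are the never takers and the compliers. Conditional independence of
`(Z, W)` and the potential outcomes given the type replaces the mean of an outcome over a type
within a cell by its mean over the whole type, and conditional independence of `Z` and the type
given `W` replaces the share of a type in a cell by its share in `{W = w}`. Hence
`r₀(w) = P(NT | W = w) ρ₀ - P(CP | W = w) E[Y₀₀ | CP]` for `w = 0, 1`, a linear system in
`ρ₀` and `E[Y₀₀ | CP]` which the relevance condition makes uniquely solvable.
-/

open MeasureTheory ProbabilityTheory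

/-- `pr μ A` is the probability of the event `A`, as a real number. -/
noncomputable def pr {Ω : Type*} [MeasurableSpace Ω] (μ : Measure Ω) (A : Set Ω) : ℝ :=
  (μ A).toReal

/-- `prCond μ A B` is the conditional probability `P(A | B) = P(A ∩ B) / P(B)`. -/
noncomputable def prCond {Ω : Type*} [MeasurableSpace Ω] (μ : Measure Ω) (A B : Set Ω) : ℝ :=
  pr μ (A ∩ B) / pr μ B

/-- `cexp μ A f` is the conditional expectation `E[f | A]` of `f` given the event `A`. -/
noncomputable def cexp {Ω : Type*} [MeasurableSpace Ω] (μ : Measure Ω) (A : Set Ω)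
    (f : Ω → ℝ) : ℝ :=
  ∫ ω, f ω ∂(μ[|A])

/-- The event `{ω | f ω = c}`. -/
def evEq {Ω : Type*} (f : Ω → ℝ) (c : ℝ) : Set Ω := {ω | f ω = c}

/-- Always takers: `D₁ = D₀ = 1`. -/
def ATset {Ω : Type*} (D1 D0 : Ω → ℝ) : Set Ω := {ω | D1 ω = 1 ∧ D0 ω = 1}

/-- Never takers: `D₁ = D₀ = 0`. -/
def NTset {Ω : Type*} (D1 D0 : Ω → ℝ) : Set Ω := {ω | D1 ω = 0 ∧ D0 ω = 0}

/-- Compliers: `D₁ = 1`, `D₀ = 0`. -/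
def CPset {Ω : Type*} (D1 D0 : Ω → ℝ) : Set Ω := {ω | D1 ω = 1 ∧ D0 ω = 0}

section Potential

variable {Ω : Type*} {Y : Fin 2 → Fin 2 → Ω → ℝ} {D1 D0 Z D Yo : Ω → ℝ} {ω : Ω}

lemma untreated_outcome_eq_of_Z_eq_one (hD1v : D1 ω = 0 ∨ D1 ω = 1)
    (hD0v : D0 ω = 0 ∨ D0 ω = 1) (hmono : D0 ω ≤ D1 ω)
    (hD : D ω = D1 ω * Z ω + D0 ω * (1 - Z ω))
    (hYo : Yo ω = (Y 1 1 ω * Z ω + Y 1 0 ω * (1 - Z ω)) * D ω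
      + (Y 0 1 ω * Z ω + Y 0 0 ω * (1 - Z ω)) * (1 - D ω)) (hZ : Z ω = 1) :
    Yo ω * (1 - D ω) = (NTset D1 D0).indicator (Y 0 1) ω := by
  rcases hD1v with h1 | h1 <;> rcases hD0v with h0 | h0
  · simp [NTset, hYo, hD, hZ, h1, h0]
  · linarith
  all_goals simp [NTset, hYo, hD, hZ, h1, h0]

lemma untreated_outcome_eq_of_Z_eq_zero (hD1v : D1 ω = 0 ∨ D1 ω = 1)
    (hD0v : D0 ω = 0 ∨ D0 ω = 1)
    (hD : D ω = D1 ω * Z ω + D0 ω * (1 - Z ω))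
    (hYo : Yo ω = (Y 1 1 ω * Z ω + Y 1 0 ω * (1 - Z ω)) * D ω
      + (Y 0 1 ω * Z ω + Y 0 0 ω * (1 - Z ω)) * (1 - D ω)) (hZ : Z ω = 0) :
    Yo ω * (1 - D ω)
      = (NTset D1 D0).indicator (Y 0 0) ω + (CPset D1 D0).indicator (Y 0 0) ω := by
  rcases hD1v with h1 | h1 <;> rcases hD0v with h0 | h0
  all_goals simp [NTset, CPset, hYo, hD, hZ, h1, h0]

end Potential

section Measure

variable {Ω : Type*} [MeasurableSpace Ω] {μ : Measure Ω}

lemma cexp_eq_inv_mul_setIntegral {A : Set Ω} {f : Ω → ℝ} :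
    cexp μ A f = (pr μ A)⁻¹ * ∫ ω in A, f ω ∂μ := by
  rw [cexp, pr, ProbabilityTheory.cond, integral_smul_measure, ENNReal.toReal_inv, smul_eq_mul]

lemma cexp_congr_ae {A : Set Ω} {f g : Ω → ℝ} (hA : MeasurableSet A)
    (h : ∀ᵐ ω ∂μ, ω ∈ A → f ω = g ω) : cexp μ A f = cexp μ A g := by
  rw [cexp_eq_inv_mul_setIntegral, cexp_eq_inv_mul_setIntegral, setIntegral_congr_ae hA h]

lemma cexp_add {A : Set Ω} {f g : Ω → ℝ} (hf : Integrable f μ) (hg : Integrable g μ) :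
    cexp μ A (fun ω => f ω + g ω) = cexp μ A f + cexp μ A g := by
  simp only [cexp_eq_inv_mul_setIntegral, integral_add hf.integrableOn hg.integrableOn, mul_add]

lemma cexp_sub {A : Set Ω} {f g : Ω → ℝ} (hf : Integrable f μ) (hg : Integrable g μ) :
    cexp μ A (fun ω => f ω - g ω) = cexp μ A f - cexp μ A g := by
  simp only [cexp_eq_inv_mul_setIntegral, integral_sub hf.integrableOn hg.integrableOn, mul_sub]

lemma prCond_eq_toReal_cond {A B : Set Ω} (hB : MeasurableSet B) :
    prCond μ A B = (μ[|B] A).toReal := by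
  rw [prCond, pr, pr, cond_apply hB, ENNReal.toReal_mul, ENNReal.toReal_inv, Set.inter_comm,
    div_eq_inv_mul]

lemma cond_preimage_eq_of_indepFun {α β : Type*} [MeasurableSpace α] [MeasurableSpace β]
    {ν : Measure Ω} [IsFiniteMeasure ν] {X : Ω → α} {V : Ω → β} {s : Set α} {t : Set β}
    (hX : Measurable X) (hs : MeasurableSet s) (ht : MeasurableSet t)
    (hind : IndepFun X V ν) (hν : ν (X ⁻¹' s) ≠ 0) :
    ν[|X ⁻¹' s] (V ⁻¹' t) = ν (V ⁻¹' t) := by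
  rw [cond_apply (hX hs), hind.measure_inter_preimage_eq_mul s t hs ht, ← mul_assoc,
    ENNReal.inv_mul_cancel hν (measure_ne_top _ _), one_mul]

lemma prCond_inter_preimage_eq_of_indepFun {α β : Type*} [MeasurableSpace α] [MeasurableSpace β]
    [IsFiniteMeasure μ] {X : Ω → α} {V : Ω → β} {s : Set α} {t : Set β} {B : Set Ω}
    (hB : MeasurableSet B) (hX : Measurable X) (hs : MeasurableSet s) (ht : MeasurableSet t)
    (hind : IndepFun X V μ[|B]) (hpos : μ (X ⁻¹' s ∩ B) ≠ 0) :
    prCond μ (V ⁻¹' t) (X ⁻¹' s ∩ B) = prCond μ (V ⁻¹' t) B := by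
  rw [prCond_eq_toReal_cond ((hX hs).inter hB), prCond_eq_toReal_cond hB, Set.inter_comm,
    ← cond_cond_eq_cond_inter hB (hX hs),
    cond_preimage_eq_of_indepFun hX hs ht hind
      (cond_pos_of_inter_ne_zero hB (by rwa [Set.inter_comm])).ne']

lemma setIntegral_inter_preimage_eq_of_indepFun {α : Type*} [MeasurableSpace α]
    [IsFiniteMeasure μ] {X : Ω → α} {p : Set α} {G : Set Ω} {f : Ω → ℝ}
    (hX : Measurable X) (hp : MeasurableSet p) (hf : Measurable f)
    (hind : IndepFun X f μ[|G]) :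
    ∫ ω in X ⁻¹' p ∩ G, f ω ∂μ = pr μ (X ⁻¹' p ∩ G) * cexp μ G f := by
  by_cases hG0 : μ G = 0
  · have hnull : μ (X ⁻¹' p ∩ G) = 0 := measure_mono_null Set.inter_subset_right hG0
    simp [pr, hnull, Measure.restrict_eq_zero.mpr hnull]
  have h := Indep.setIntegral_eq_mul (f := id) hX.comap_le hind hf.aemeasurable ⟨p, hp, rfl⟩
    aestronglyMeasurable_id
  simp only [id, ProbabilityTheory.cond, Measure.restrict_smul, Measure.restrict_restrict (hX hp),
    integral_smul_measure, Measure.real, Measure.smul_apply, smul_eq_mul,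
    Measure.restrict_apply (hX hp), ENNReal.toReal_mul] at h
  rw [cexp, ProbabilityTheory.cond, integral_smul_measure, smul_eq_mul, pr]
  have hGinv : (μ G)⁻¹.toReal ≠ 0 := by simp [ENNReal.toReal_eq_zero_iff, hG0]
  exact mul_left_cancel₀ hGinv (h.trans (by ring))

lemma cexp_indicator_eq_of_indepFun {α : Type*} [MeasurableSpace α]
    [IsFiniteMeasure μ] {X : Ω → α} {p : Set α} {G : Set Ω} {f : Ω → ℝ}
    (hG : MeasurableSet G) (hX : Measurable X) (hp : MeasurableSet p) (hf : Measurable f)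
    (hind : IndepFun X f μ[|G]) :
    cexp μ (X ⁻¹' p) (G.indicator f) = prCond μ G (X ⁻¹' p) * cexp μ G f := by
  rw [cexp_eq_inv_mul_setIntegral, setIntegral_indicator hG,
    setIntegral_inter_preimage_eq_of_indepFun hX hp hf hind, prCond, Set.inter_comm G]
  ring

lemma cexp_indicator_preimage_eq_of_condIndep {α β γ : Type*} [MeasurableSpace α]
    [MeasurableSpace β] [MeasurableSpace γ] [IsFiniteMeasure μ]
    {X : Ω → α} {T : Ω → γ} {V : Ω → β} {s : Set α} {u : Set γ} {t : Set β} {f : Ω → ℝ}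
    (hX : Measurable X) (hT : Measurable T) (hV : Measurable V) (hf : Measurable f)
    (hs : MeasurableSet s) (hu : MeasurableSet u) (ht : MeasurableSet t)
    (hindf : IndepFun (fun ω => (X ω, T ω)) f μ[|V ⁻¹' t])
    (hindV : IndepFun X V μ[|T ⁻¹' u]) (hpos : μ (X ⁻¹' s ∩ T ⁻¹' u) ≠ 0) :
    cexp μ (X ⁻¹' s ∩ T ⁻¹' u) ((V ⁻¹' t).indicator f)
      = prCond μ (V ⁻¹' t) (T ⁻¹' u) * cexp μ (V ⁻¹' t) f := by
  rw [← prCond_inter_preimage_eq_of_indepFun (hT hu) hX hs ht hindV hpos, ← Set.mk_preimage_prod]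
  exact cexp_indicator_eq_of_indepFun (hV ht) (hX.prodMk hT) (hs.prod hu) hf hindf

lemma cexp_cell_indicator_stratum [IsFiniteMeasure μ] {D1 D0 Z W f : Ω → ℝ} {z w i j : ℝ}
    (hD1m : Measurable D1) (hD0m : Measurable D0) (hZm : Measurable Z) (hWm : Measurable W)
    (hf : Measurable f)
    (hindf : IndepFun (fun ω => (Z ω, W ω)) f μ[|{ω | D1 ω = i ∧ D0 ω = j}])
    (hindZ : IndepFun Z (fun ω => (D1 ω, D0 ω)) μ[|evEq W w])
    (hpos : 0 < pr μ (evEq Z z ∩ evEq W w)) :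
    cexp μ (evEq Z z ∩ evEq W w) ({ω | D1 ω = i ∧ D0 ω = j}.indicator f)
      = prCond μ {ω | D1 ω = i ∧ D0 ω = j} (evEq W w) * cexp μ {ω | D1 ω = i ∧ D0 ω = j} f := by
  have hstratum : {ω | D1 ω = i ∧ D0 ω = j} = (fun ω => (D1 ω, D0 ω)) ⁻¹' {(i, j)} := by
    ext; simp
  rw [hstratum] at hindf ⊢
  exact cexp_indicator_preimage_eq_of_condIndep (s := {z}) (u := {w}) hZm hWm
    (hD1m.prodMk hD0m) hf (measurableSet_singleton _) (measurableSet_singleton _)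
    (measurableSet_singleton _) hindf hindZ (ENNReal.toReal_pos_iff.mp hpos).1.ne'

end Measure

theorem rho0_identified_general
    {Ω : Type*} [MeasurableSpace Ω] (μ : Measure Ω) [IsProbabilityMeasure μ]
    (Y : Fin 2 → Fin 2 → Ω → ℝ) (D1 D0 Z W : Ω → ℝ)
    (hYint : ∀ d z, Integrable (Y d z) μ) (hYmeas : ∀ d z, Measurable (Y d z))
    (hD1v : ∀ ω, D1 ω = 0 ∨ D1 ω = 1) (hD0v : ∀ ω, D0 ω = 0 ∨ D0 ω = 1)
    (hD1m : Measurable D1) (hD0m : Measurable D0) (hZm : Measurable Z) (hWm : Measurable W)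
    (D : Ω → ℝ) (hD : ∀ ω, D ω = D1 ω * Z ω + D0 ω * (1 - Z ω))
    (Yo : Ω → ℝ)
    (hYo : ∀ ω, Yo ω = (Y 1 1 ω * Z ω + Y 1 0 ω * (1 - Z ω)) * D ω
      + (Y 0 1 ω * Z ω + Y 0 0 ω * (1 - Z ω)) * (1 - D ω))
    (hmono : ∀ᵐ ω ∂μ, D0 ω ≤ D1 ω)
    (hCI1 : ∀ (d z : Fin 2) (i j : ℝ),
      IndepFun (fun ω => (Z ω, W ω)) (Y d z) (μ[|{ω | D1 ω = i ∧ D0 ω = j}]))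
    (hCI2 : ∀ w' : ℝ, IndepFun Z (fun ω => (D1 ω, D0 ω)) (μ[|evEq W w']))
    (hpos : ∀ z w : ℝ, z = 0 ∨ z = 1 → w = 0 ∨ w = 1 → 0 < pr μ (evEq Z z ∩ evEq W w))
    (ρ0 : ℝ) (hρ0 : cexp μ (NTset D1 D0) (fun ω => Y 0 1 ω - Y 0 0 ω) = ρ0)
    (r01 r00 : ℝ)
    (hr01 : r01 = cexp μ (evEq Z 1 ∩ evEq W 1) (fun ω => Yo ω * (1 - D ω))
      - cexp μ (evEq Z 0 ∩ evEq W 1) (fun ω => Yo ω * (1 - D ω)))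
    (hr00 : r00 = cexp μ (evEq Z 1 ∩ evEq W 0) (fun ω => Yo ω * (1 - D ω))
      - cexp μ (evEq Z 0 ∩ evEq W 0) (fun ω => Yo ω * (1 - D ω)))
    (hrel : prCond μ (NTset D1 D0) (evEq W 1) * prCond μ (CPset D1 D0) (evEq W 0)
      ≠ prCond μ (NTset D1 D0) (evEq W 0) * prCond μ (CPset D1 D0) (evEq W 1)) :
    ρ0 = (r01 * prCond μ (CPset D1 D0) (evEq W 0) - r00 * prCond μ (CPset D1 D0) (evEq W 1))
      / (prCond μ (NTset D1 D0) (evEq W 1) * prCond μ (CPset D1 D0) (evEq W 0)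
        - prCond μ (NTset D1 D0) (evEq W 0) * prCond μ (CPset D1 D0) (evEq W 1)) := by
  have hcell_meas : ∀ z w : ℝ, MeasurableSet (evEq Z z ∩ evEq W w) := fun z w =>
    (hZm (measurableSet_singleton z)).inter (hWm (measurableSet_singleton w))
  have hZ1 : ∀ w : ℝ, (w = 0 ∨ w = 1) →
      cexp μ (evEq Z 1 ∩ evEq W w) (fun ω => Yo ω * (1 - D ω))
        = prCond μ (NTset D1 D0) (evEq W w) * cexp μ (NTset D1 D0) (Y 0 1) := by
    intro w hw
    rw [cexp_congr_ae (hcell_meas 1 w)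
      (hmono.mono fun ω hm hω => untreated_outcome_eq_of_Z_eq_one (hD1v ω) (hD0v ω) hm (hD ω)
        (hYo ω) hω.1)]
    exact cexp_cell_indicator_stratum hD1m hD0m hZm hWm (hYmeas 0 1) (hCI1 0 1 0 0) (hCI2 w)
      (hpos 1 w (.inr rfl) hw)
  have hZ0 : ∀ w : ℝ, (w = 0 ∨ w = 1) →
      cexp μ (evEq Z 0 ∩ evEq W w) (fun ω => Yo ω * (1 - D ω))
        = prCond μ (NTset D1 D0) (evEq W w) * cexp μ (NTset D1 D0) (Y 0 0)
          + prCond μ (CPset D1 D0) (evEq W w) * cexp μ (CPset D1 D0) (Y 0 0) := by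
    intro w hw
    have hNTm : MeasurableSet (NTset D1 D0) :=
      (hD1m (measurableSet_singleton 0)).inter (hD0m (measurableSet_singleton 0))
    have hCPm : MeasurableSet (CPset D1 D0) :=
      (hD1m (measurableSet_singleton 1)).inter (hD0m (measurableSet_singleton 0))
    have hcell := fun i => cexp_cell_indicator_stratum (i := i) (j := 0) hD1m hD0m hZm hWm
      (hYmeas 0 0) (hCI1 0 0 i 0) (hCI2 w) (hpos 0 w (.inl rfl) hw)
    rw [cexp_congr_ae (hcell_meas 0 w) (.of_forall fun ω hω =>
        untreated_outcome_eq_of_Z_eq_zero (hD1v ω) (hD0v ω) (hD ω) (hYo ω) hω.1),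
      cexp_add ((hYint 0 0).indicator hNTm) ((hYint 0 0).indicator hCPm)]
    exact congrArg₂ (· + ·) (hcell 0) (hcell 1)
  have hρ : ρ0 = cexp μ (NTset D1 D0) (Y 0 1) - cexp μ (NTset D1 D0) (Y 0 0) :=
    hρ0 ▸ cexp_sub (hYint 0 1) (hYint 0 0)
  rw [hr01, hr00, hZ1 1 (.inr rfl), hZ1 0 (.inl rfl), hZ0 1 (.inr rfl), hZ0 0 (.inl rfl),
    eq_div_iff (sub_ne_zero_of_ne hrel), hρ]
  ring

/-- identification of the direct effect `ρ₀` on the untreated outcome. -/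
theorem rho0_identified
    {Ω : Type*} [MeasurableSpace Ω] (μ : Measure Ω) [IsProbabilityMeasure μ]
    (Y : Fin 2 → Fin 2 → Ω → ℝ) (D1 D0 Z W : Ω → ℝ)
    (hYint : ∀ d z, Integrable (Y d z) μ) (hYmeas : ∀ d z, Measurable (Y d z))
    (hD1v : ∀ ω, D1 ω = 0 ∨ D1 ω = 1) (hD0v : ∀ ω, D0 ω = 0 ∨ D0 ω = 1)
    (hZv : ∀ ω, Z ω = 0 ∨ Z ω = 1) (hWv : ∀ ω, W ω = 0 ∨ W ω = 1)
    (hD1m : Measurable D1) (hD0m : Measurable D0) (hZm : Measurable Z) (hWm : Measurable W)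
    (D : Ω → ℝ) (hD : ∀ ω, D ω = D1 ω * Z ω + D0 ω * (1 - Z ω))
    (Yo : Ω → ℝ)
    (hYo : ∀ ω, Yo ω = (Y 1 1 ω * Z ω + Y 1 0 ω * (1 - Z ω)) * D ω
      + (Y 0 1 ω * Z ω + Y 0 0 ω * (1 - Z ω)) * (1 - D ω))
    (hmono : ∀ᵐ ω ∂μ, D0 ω ≤ D1 ω)
    (hCI1 : ∀ (d z : Fin 2) (i j : ℝ),
      IndepFun (fun ω => (Z ω, W ω)) (Y d z) (μ[|{ω | D1 ω = i ∧ D0 ω = j}]))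
    (hCI2 : ∀ w' : ℝ, IndepFun Z (fun ω => (D1 ω, D0 ω)) (μ[|evEq W w']))
    (hpos : ∀ z w : ℝ, z = 0 ∨ z = 1 → w = 0 ∨ w = 1 → 0 < pr μ (evEq Z z ∩ evEq W w))
    (hNT : 0 < pr μ (NTset D1 D0)) (hCP : 0 < pr μ (CPset D1 D0))
    (ρ0 : ℝ) (hρ0 : cexp μ (NTset D1 D0) (fun ω => Y 0 1 ω - Y 0 0 ω) = ρ0)
    (r01 r00 : ℝ)
    (hr01 : r01 = cexp μ (evEq Z 1 ∩ evEq W 1) (fun ω => Yo ω * (1 - D ω))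
      - cexp μ (evEq Z 0 ∩ evEq W 1) (fun ω => Yo ω * (1 - D ω)))
    (hr00 : r00 = cexp μ (evEq Z 1 ∩ evEq W 0) (fun ω => Yo ω * (1 - D ω))
      - cexp μ (evEq Z 0 ∩ evEq W 0) (fun ω => Yo ω * (1 - D ω)))
    (hrel : prCond μ (NTset D1 D0) (evEq W 1) * prCond μ (CPset D1 D0) (evEq W 0)
      ≠ prCond μ (NTset D1 D0) (evEq W 0) * prCond μ (CPset D1 D0) (evEq W 1)) :
    ρ0 = (r01 * prCond μ (CPset D1 D0) (evEq W 0) - r00 * prCond μ (CPset D1 D0) (evEq W 1))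
      / (prCond μ (NTset D1 D0) (evEq W 1) * prCond μ (CPset D1 D0) (evEq W 0)
        - prCond μ (NTset D1 D0) (evEq W 0) * prCond μ (CPset D1 D0) (evEq W 1)) :=
  rho0_identified_general μ Y D1 D0 Z W hYint hYmeas hD1v hD0v hD1m hD0m hZm hWm D hD Yo hYo hmono
    hCI1 hCI2 hpos ρ0 hρ0 r01 r00 hr01 hr00 hrel
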